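/- Let y₁, y₂ > 0 be real numbers satisfying 27·y₁⁴·y₂⁴ − 18·y₁²·y₂² + 4·y₁² + 4·y₂² = 1 and (y₁,y₂) ≠ (1/√3, 1/√3). Then the set {(x₁,x₂) ∈ ℝ² : C(x₁,x₂) = 0 and E(x₁,x₂) = 0} has exactly 4 elements. -/

import Mathlib

/-!
In the coordinates u = 2x₁ + x₂, v = x₁ + 2x₂ the conic C becomes u² - uv + v² and the cubic
part of E factors as uv(u - v). The caustic is a rational curve: (y₁², y₂²) is parametrised by
t ∈ (-1/2, 1) through 3y₂² = 1 - t², 3(1 + t)²y₁² = 1 + 2t, and after rescaling (u, v) by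
(1 + t)/√3 the equations have polynomial coefficients in t. Then E + u·C is linear in v, and
eliminating v leaves (u² - c²)²(u² - (1 + 2t)²) with c² = 1 + t + t²: on the caustic two pairs of
the six intersection points of the conic and the cubic coalesce, leaving ±(c, c(1 + t)) and
±(1 + 2t, 1 - t²), which are distinct unless t = 0.
-/

open Real

def lagrangianFiber (a b : ℝ) : Set (ℝ × ℝ) :=
  {p | p.1^2 + p.1 * p.2 + p.2^2 - 3 * (1 - a - b) = 0 ∧
    2 * p.1^3 + 3 * p.1^2 * p.2 + 9 * p.1 * a + 18 * p.2 * a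
      - 2 * p.2^3 - 3 * p.1 * p.2^2 - 9 * p.2 * b - 18 * p.1 * b = 0}

def toNormalCoords (k : ℝ) (p : ℝ × ℝ) : ℝ × ℝ :=
  (k * (2 * p.1 + p.2), k * (p.1 + 2 * p.2))

def normalFiber (t : ℝ) : Set (ℝ × ℝ) :=
  {q | q.1^2 - q.1 * q.2 + q.2^2 = (1 + t + t^2)^2 ∧
    q.1 * q.2 * (q.1 - q.2) + (1 + 2 * t) * q.2 - (1 + t)^2 * (1 - t^2) * q.1 = 0}

lemma exists_sq_eq_and_pow_three_eq {x y : ℝ} (h : x^2 = y^3) : ∃ t : ℝ, t^2 = y ∧ t^3 = x := by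
  have hy : 0 ≤ y := (Odd.pow_nonneg_iff (by decide)).mp (h ▸ sq_nonneg x)
  have hs : √y ^ 2 = y := sq_sqrt hy
  have hx : x^2 = (√y ^ 3)^2 := by rw [h]; nth_rewrite 1 [← hs]; ring
  rcases sq_eq_sq_iff_eq_or_eq_neg.mp hx with hx | hx
  · exact ⟨√y, hs, hx.symm⟩
  · exact ⟨-√y, by rw [neg_sq, hs], by rw [hx]; ring⟩

-- Multiplied by 27b²/4, the equation of the caustic reads ((27ab² - 9b + 2)/2)² = (1 - 3b)³.
lemma exists_caustic_param {a b : ℝ} (ha : 0 < a) (hb : 0 < b)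
    (h : 27 * a^2 * b^2 - 18 * a * b + 4 * a + 4 * b = 1) :
    ∃ t ∈ Set.Ioo (-1/2 : ℝ) 1, 3 * b = 1 - t^2 ∧ 3 * (1 + t)^2 * a = 1 + 2 * t := by
  obtain ⟨t, ht2, ht3⟩ := exists_sq_eq_and_pow_three_eq
    (x := (27 * a * b^2 - 9 * b + 2) / 2) (y := 1 - 3 * b)
    (by linear_combination (27 * b^2 / 4) * h)
  have hb' : 3 * b = 1 - t^2 := by linear_combination ht2
  have ht1 : t^2 < 1 := by linarith
  have ha' : 3 * (1 + t)^2 * a = 1 + 2 * t := by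
    have h1t : (1 - t)^2 ≠ 0 := pow_ne_zero 2 (by nlinarith)
    refine mul_left_cancel₀ h1t ?_
    linear_combination (3 - 3 * a * (1 - t^2 + 3 * b)) * hb' - 2 * ht3
  refine ⟨t, ⟨?_, by nlinarith⟩, hb', ha'⟩
  have : 0 < 1 + t := by nlinarith
  have : 0 < 3 * (1 + t)^2 * a := by positivity
  linarith

lemma eq_zero_iff_eq_zero_of_eq_mul {R : Type*} [MulZeroClass R] [NoZeroDivisors R] {x y c : R}
    (hc : c ≠ 0) (h : y = c * x) : x = 0 ↔ y = 0 := by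
  rw [h, mul_eq_zero_iff_left hc]

lemma lagrangianFiber_eq_preimage {a b k t : ℝ} (hk : k ≠ 0) (hkt : 3 * k^2 = (1 + t)^2)
    (hb : 3 * b = 1 - t^2) (ha : 3 * (1 + t)^2 * a = 1 + 2 * t) :
    lagrangianFiber a b = toNormalCoords k ⁻¹' normalFiber t := by
  ext ⟨x₁, x₂⟩
  simp only [Set.mem_preimage, toNormalCoords]
  refine and_congr
    ((eq_zero_iff_eq_zero_of_eq_mul (c := 3 * k^2) (by positivity) ?_).trans sub_eq_zero)
    (eq_zero_iff_eq_zero_of_eq_mul (c := k^3) (pow_ne_zero 3 hk) ?_)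
  · linear_combination 3 * (1 - a - b) * hkt - ha - (1 + t)^2 * hb
  · linear_combination k * (3 * b * (2 * x₁ + x₂) - 3 * a * (x₁ + 2 * x₂)) * hkt
      - k * (x₁ + 2 * x₂) * ha + k * (1 + t)^2 * (2 * x₁ + x₂) * hb

lemma toNormalCoords_bijective {k : ℝ} (hk : k ≠ 0) : (toNormalCoords k).Bijective := by
  refine ⟨fun ⟨x₁, x₂⟩ ⟨y₁, y₂⟩ h ↦ ?_,
    fun ⟨u, v⟩ ↦ ⟨((2 * u - v) / (3 * k), (2 * v - u) / (3 * k)), ?_⟩⟩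
  · simp only [toNormalCoords, Prod.mk.injEq, mul_right_inj' hk] at h
    obtain ⟨h₁, h₂⟩ := h
    exact Prod.ext (by linarith) (by linarith)
  · simp only [toNormalCoords, Prod.mk.injEq]
    constructor <;> field_simp <;> ring

lemma eq_one_div_sqrt_three {y : ℝ} (hy : 0 < y) (h : 3 * y^2 = 1) : y = 1 / √3 := by
  rw [eq_div_iff (by positivity), ← sqrt_sq hy.le, ← sqrt_mul (sq_nonneg y), mul_comm, h, sqrt_one]

lemma normalFiber_eq {t c : ℝ} (ht : 1 + 2 * t ≠ 0) (hc : c^2 = 1 + t + t^2) :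
    normalFiber t =
      {(c, c * (1 + t)), (-c, -(c * (1 + t))),
        (1 + 2 * t, 1 - t^2), (-(1 + 2 * t), -(1 - t^2))} := by
  ext ⟨u, v⟩
  simp only [normalFiber, Set.mem_ofPred_eq, Set.mem_insert_iff, Set.mem_singleton_iff,
    Prod.mk.injEq]
  constructor
  · rintro ⟨hC, hE⟩
    have hv : (1 + 2 * t) * v = u * (2 + 4 * t + 3 * t^2 - u^2) := by
      linear_combination hE + u * hC
    have hu : (u^2 - c^2)^2 * (u^2 - (1 + 2 * t)^2) = 0 := by
      linear_combination (1 + 2 * t)^2 * hC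
        - ((1 + 2 * t) * v + u * (2 + 4 * t + 3 * t^2 - u^2) - (1 + 2 * t) * u) * hv
        - (2 * u^2 - c^2 - (1 + t + t^2)) * (u^2 - (1 + 2 * t)^2) * hc
    rcases mul_eq_zero.mp hu with hu | hu
    · rcases sq_eq_sq_iff_eq_or_eq_neg.mp (sub_eq_zero.mp (pow_eq_zero_iff two_ne_zero |>.mp hu))
        with hu | hu <;> subst u
      · exact .inl ⟨rfl, mul_left_cancel₀ ht (by linear_combination hv - c * hc)⟩
      · exact .inr <| .inl ⟨rfl, mul_left_cancel₀ ht (by linear_combination hv + c * hc)⟩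
    · rcases sq_eq_sq_iff_eq_or_eq_neg.mp (sub_eq_zero.mp hu) with hu | hu <;> subst u
      · exact .inr <| .inr <| .inl ⟨rfl, mul_left_cancel₀ ht (by linear_combination hv)⟩
      · exact .inr <| .inr <| .inr ⟨rfl, mul_left_cancel₀ ht (by linear_combination hv)⟩
  · rintro (⟨hu, hv⟩ | ⟨hu, hv⟩ | ⟨hu, hv⟩ | ⟨hu, hv⟩) <;> subst u v
    · exact ⟨by linear_combination (1 + t + t^2) * hc, by linear_combination -t * c * (1 + t) * hc⟩
    · exact ⟨by linear_combination (1 + t + t^2) * hc, by linear_combination t * c * (1 + t) * hc⟩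
    · exact ⟨by ring, by ring⟩
    · exact ⟨by ring, by ring⟩

lemma ncard_normalFiber {t : ℝ} (ht₀ : t ≠ 0) (ht₁ : 1 + t ≠ 0) (ht₂ : 1 + 2 * t ≠ 0) :
    (normalFiber t).ncard = 4 := by
  have hK : 0 < 1 + t + t^2 := by nlinarith [sq_nonneg (2 * t + 1)]
  have hc₀ : √(1 + t + t^2) ≠ 0 := (sqrt_pos.mpr hK).ne'
  rw [normalFiber_eq ht₂ (sq_sqrt hK.le), Set.ncard_eq_four]
  have hPQ : 3 * t * (1 + t) ≠ 0 := mul_ne_zero (mul_ne_zero three_ne_zero ht₀) ht₁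
  refine ⟨_, _, _, _, ?_, ?_, ?_, ?_, ?_, ?_, rfl⟩ <;> simp only [ne_eq, Prod.mk.injEq, not_and]
  · exact fun h _ ↦ hc₀ (by linarith)
  all_goals first
    | exact fun h _ ↦ ht₂ (by linarith)
    | exact fun h₁ h₂ ↦ hPQ (by linear_combination h₂ - (1 + t) * h₁)
    | exact fun h₁ h₂ ↦ hPQ (by linear_combination (1 + t) * h₁ - h₂)

/-- On the interior caustic 𝖢₂, the fiber has exactly 4 elements. -/
theorem stmt_2 (y₁ y₂ : ℝ) (hy₁ : 0 < y₁) (hy₂ : 0 < y₂)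
    (h : 27 * y₁^4 * y₂^4 - 18 * y₁^2 * y₂^2 + 4 * y₁^2 + 4 * y₂^2 = 1)
    (hne : ((y₁, y₂) : ℝ × ℝ) ≠ (1 / Real.sqrt 3, 1 / Real.sqrt 3)) :
    ({p : ℝ × ℝ |
        p.1^2 + p.1 * p.2 + p.2^2 - 3 * (1 - y₁^2 - y₂^2) = 0 ∧
        2 * p.1^3 + 3 * p.1^2 * p.2 + 9 * p.1 * y₁^2 + 18 * p.2 * y₁^2
          - 2 * p.2^3 - 3 * p.1 * p.2^2 - 9 * p.2 * y₂^2 - 18 * p.1 * y₂^2 = 0}).ncard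
      = 4 := by
  obtain ⟨t, ⟨ht, -⟩, hb, ha⟩ :=
    exists_caustic_param (pow_pos hy₁ 2) (pow_pos hy₂ 2) (by linear_combination h)
  have ht₀ : t ≠ 0 := by
    rintro rfl
    exact hne (Prod.ext (eq_one_div_sqrt_three hy₁ (by linarith))
      (eq_one_div_sqrt_three hy₂ (by linarith)))
  have hk : (1 + t) / √3 ≠ 0 := div_ne_zero (by linarith) (by positivity)
  have hkt : 3 * ((1 + t) / √3)^2 = (1 + t)^2 := by
    rw [div_pow, sq_sqrt zero_le_three]
    field_simp
  have hφ := toNormalCoords_bijective hk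
  change (lagrangianFiber (y₁^2) (y₂^2)).ncard = 4
  rw [lagrangianFiber_eq_preimage hk hkt hb ha,
    Set.ncard_preimage_of_injective_subset_range hφ.injective (by simp [hφ.surjective.range_eq])]
  exact ncard_normalFiber ht₀ (by linarith) (by linarith)
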